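/- Let G be a finite weighted graph with vertex set V, and define the bipartite double cover G' with vertex set V' = V × {0,1}, edges (u,0)(v,1) and (u,1)(v,0) for each edge uv of G, and weights w'_{(u,0)(v,1)} = w'_{(u,1)(v,0)} = w_{uv}. Let σ be a probability distribution on V, σ'_{(u,0)} = σ_u, and M ⊆ V with M' = M × {0,1}. Then the total weight satisfies W' = 2W, and the effective resistance satisfies R_{σ',M'}(G') ≤ R_{σ,M}(G). -/

import Mathlib

noncomputable section

variable {V : Type*} [Fintype V]

/-- `p` is a flow from `σ` to `M` on the weighted graph with symmetric weights
`wt`: it is antisymmetric, supported on edges, and has net outflow `σ u` at every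
unmarked vertex `u`. -/
def IsFlow (wt : V → V → ℝ) (σ : V → ℝ) (M : Set V) (p : V → V → ℝ) : Prop :=
  (∀ u v, p v u = -p u v) ∧ (∀ u v, p u v ≠ 0 → 0 < wt u v) ∧
    (∀ u ∉ M, ∑ v, p u v = σ u)

/-- The energy `Σ_e p_e²/w_e` of a flow (each undirected edge counted once). -/
def flowEnergy (wt p : V → V → ℝ) : ℝ :=
  (1 / 2) * ∑ u, ∑ v, (p u v) ^ 2 / wt u v

/-- The effective resistance `R_{σ,M}`: the infimum of energies of flows from
`σ` to `M`. -/
def effRes (wt : V → V → ℝ) (σ : V → ℝ) (M : Set V) : ℝ :=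
  sInf {x | ∃ p, IsFlow wt σ M p ∧ x = flowEnergy wt p}

/-!
A flow `p` on `G` is lifted to `G'` by sending `(p + t)/2` from level `0` to level `1` and
`(p - t)/2` from level `1` to level `0`, where `t` is symmetric, `|t| ≤ |p|`, and has the same
row sums as `p` off `M`. Symmetry of `t` makes the net outflow `σ_u` on level `0` and `0` on
level `1`, and `((p + t)/2)² + ((p - t)/2)² ≤ p²` bounds the energy. Such a `t` exists by
Hahn–Banach: for weights `λ` vanishing on `M` the dual condition is
`∑ λ_u σ_u ≤ ½ ∑ |p_uv| |λ_u + λ_v|`, which holds since `σ ≥ 0` and `||a| - |b|| ≤ |a + b|`.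
-/

open Finset

theorem sum_sum_nonneg_of_add_swap_nonneg (g : V → V → ℝ) (hg : ∀ u v, 0 ≤ g u v + g v u) :
    0 ≤ ∑ u, ∑ v, g u v := by
  have h : 2 * ∑ u, ∑ v, g u v = ∑ u, ∑ v, (g u v + g v u) := by
    simp only [sum_add_distrib, two_mul]
    rw [sum_comm (f := fun u v => g v u)]
  have := sum_nonneg fun u (_ : u ∈ univ) => sum_nonneg fun v (_ : v ∈ univ) => hg u v
  linarith

/-- The maximiser of `t ↦ ∑ u, l u * ∑ v, t u v` over symmetric `t` with `|t| ≤ |p|`. -/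
def absAlignedWith (p : V → V → ℝ) (l : V → ℝ) : V → V → ℝ :=
  fun u v => if 0 ≤ l u + l v then |p u v| else -|p u v|

theorem sum_abs_mul_sum_le_sum_mul_sum_absAlignedWith (p : V → V → ℝ)
    (hp : ∀ u v, p v u = -p u v) (l : V → ℝ) :
    ∑ u, |l u| * ∑ v, p u v ≤ ∑ u, l u * ∑ v, absAlignedWith p l u v := by
  rw [← sub_nonneg]
  simp only [mul_sum, ← sum_sub_distrib]
  apply sum_sum_nonneg_of_add_swap_nonneg
  intro u v
  have haligned : (l u + l v) * absAlignedWith p l u v = |l u + l v| * |p u v| := by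
    unfold absAlignedWith
    split_ifs with h
    · rw [abs_of_nonneg h]
    · rw [abs_of_neg (not_le.mp h)]; ring
  have hdiff : (|l u| - |l v|) * p u v ≤ |l u + l v| * |p u v| :=
    calc (|l u| - |l v|) * p u v ≤ |(|l u| - |l v|) * p u v| := le_abs_self _
      _ = |(|l u| - |l v|)| * |p u v| := abs_mul _ _
      _ ≤ |l u + l v| * |p u v| := mul_le_mul_of_nonneg_right
        (by simpa using abs_abs_sub_abs_le_abs_sub (l u) (-l v)) (abs_nonneg _)
  simp only [absAlignedWith, hp u v, abs_neg, add_comm (l v)] at haligned ⊢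
  linarith

def symmDominatedBy {ι : Type*} (p : ι → ι → ℝ) : Set (ι → ι → ℝ) :=
  {t | (∀ u v, t v u = t u v) ∧ ∀ u v, |t u v| ≤ |p u v|}

theorem convex_symmDominatedBy {ι : Type*} (p : ι → ι → ℝ) : Convex ℝ (symmDominatedBy p) := by
  rintro t ⟨ht_symm, ht_abs⟩ t' ⟨ht'_symm, ht'_abs⟩ a b ha hb hab
  refine ⟨fun u v => by simp [ht_symm u v, ht'_symm u v], fun u v => ?_⟩
  calc |a * t u v + b * t' u v| ≤ a * |t u v| + b * |t' u v| := by
        simpa [abs_mul, abs_of_nonneg ha, abs_of_nonneg hb] using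
          abs_add_le (a * t u v) (b * t' u v)
    _ ≤ a * |p u v| + b * |p u v| :=
      add_le_add (mul_le_mul_of_nonneg_left (ht_abs u v) ha)
        (mul_le_mul_of_nonneg_left (ht'_abs u v) hb)
    _ = |p u v| := by rw [← add_mul, hab, one_mul]

theorem isCompact_symmDominatedBy {ι : Type*} (p : ι → ι → ℝ) : IsCompact (symmDominatedBy p) := by
  have hbox : IsCompact (Set.univ.pi fun u => Set.univ.pi fun v => Set.Icc (-|p u v|) |p u v|) :=
    isCompact_univ_pi fun u => isCompact_univ_pi fun v => isCompact_Icc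
  refine hbox.of_isClosed_subset ?_ fun t ht => ?_
  · simp only [symmDominatedBy, Set.ofPred_and, Set.ofPred_forall]
    refine .inter (isClosed_iInter fun u => isClosed_iInter fun v => isClosed_eq ?_ ?_)
      (isClosed_iInter fun u => isClosed_iInter fun v => isClosed_le ?_ ?_) <;> fun_prop
  · exact Set.mem_univ_pi.2 fun u => Set.mem_univ_pi.2 fun v => abs_le.mp (ht.2 u v)

open Classical in
def rowSumOff (M : Set V) : (V → V → ℝ) →ₗ[ℝ] V → ℝ where
  toFun t u := if u ∈ M then 0 else ∑ v, t u v
  map_add' t t' := by ext u; by_cases hu : u ∈ M <;> simp [hu, sum_add_distrib]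
  map_smul' c t := by ext u; by_cases hu : u ∈ M <;> simp [hu, mul_sum]

theorem exists_symm_abs_le_rowSum_eq (p : V → V → ℝ) (hp : ∀ u v, p v u = -p u v) (M : Set V)
    (hout : ∀ u ∉ M, 0 ≤ ∑ v, p u v) :
    ∃ t : V → V → ℝ, (∀ u v, t v u = t u v) ∧ (∀ u v, |t u v| ≤ |p u v|) ∧
      ∀ u ∉ M, ∑ v, t u v = ∑ v, p u v := by
  classical
  suffices rowSumOff M p ∈ rowSumOff M '' symmDominatedBy p by
    obtain ⟨t, ⟨ht_symm, ht_abs⟩, htp⟩ := this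
    refine ⟨t, ht_symm, ht_abs, fun u hu => ?_⟩
    simpa [rowSumOff, hu] using congrFun htp u
  by_contra hp_out
  obtain ⟨f, r, hf_lt, hf_gt⟩ := geometric_hahn_banach_closed_point
    ((convex_symmDominatedBy p).linear_image _)
    ((isCompact_symmDominatedBy p).image (rowSumOff M).continuous_of_finiteDimensional).isClosed
    hp_out
  set l : V → ℝ := fun u => if u ∈ M then 0 else f fun v => if u = v then 1 else 0
  have hf : ∀ t, f (rowSumOff M t) = ∑ u, l u * ∑ v, t u v := fun t => by
    rw [← f.coe_coe, LinearMap.pi_apply_eq_sum_univ]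
    refine sum_congr rfl fun u _ => ?_
    by_cases hu : u ∈ M <;> simp [rowSumOff, l, hu, mul_comm]
  have haligned : absAlignedWith p l ∈ symmDominatedBy p := by
    refine ⟨fun u v => ?_, fun u v => ?_⟩
    · simp only [absAlignedWith, add_comm (l v), hp v u, abs_neg]
    · unfold absAlignedWith; split_ifs <;> simp
  have hl_abs : ∑ u, l u * ∑ v, p u v ≤ ∑ u, |l u| * ∑ v, p u v := by
    refine sum_le_sum fun u _ => ?_
    by_cases hu : u ∈ M
    · simp [l, hu]
    · exact mul_le_mul_of_nonneg_right (le_abs_self _) (hout u hu)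
  have := hf_lt _ ⟨_, haligned, rfl⟩
  rw [hf] at this hf_gt
  linarith [sum_abs_mul_sum_le_sum_mul_sum_absAlignedWith p hp l]

section Flows

variable {wt : V → V → ℝ} {σ : V → ℝ} {M : Set V}

theorem flowEnergy_nonneg {p : V → V → ℝ} (hp : IsFlow wt σ M p) : 0 ≤ flowEnergy wt p := by
  refine mul_nonneg (by norm_num) (sum_nonneg fun u _ => sum_nonneg fun v _ => ?_)
  by_cases h : p u v = 0
  · simp [h]
  · exact div_nonneg (sq_nonneg _) (hp.2.1 u v h).le

theorem effRes_le_flowEnergy {p : V → V → ℝ} (hp : IsFlow wt σ M p) :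
    effRes wt σ M ≤ flowEnergy wt p :=
  csInf_le ⟨0, by rintro _ ⟨q, hq, rfl⟩; exact flowEnergy_nonneg hq⟩ ⟨p, hp, rfl⟩

theorem effRes_eq_zero_of_not_exists_isFlow (h : ¬∃ p, IsFlow wt σ M p) : effRes wt σ M = 0 := by
  have : {x | ∃ p, IsFlow wt σ M p ∧ x = flowEnergy wt p} = ∅ :=
    Set.eq_empty_of_forall_notMem fun _ ⟨p, hp, _⟩ => h ⟨p, hp⟩
  rw [effRes, this, Real.sInf_empty]

/-- When `G` carries no flow, `effRes wt σ M` is the junk value `sInf ∅ = 0`. -/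
theorem effRes_le_effRes {W : Type*} [Fintype W] {wt' : W → W → ℝ} {σ' : W → ℝ} {M' : Set W}
    (hlift : ∀ p, IsFlow wt σ M p → ∃ q, IsFlow wt' σ' M' q ∧ flowEnergy wt' q ≤ flowEnergy wt p)
    (hproj : ∀ q, IsFlow wt' σ' M' q → ∃ p, IsFlow wt σ M p) :
    effRes wt' σ' M' ≤ effRes wt σ M := by
  by_cases hflow : ∃ p, IsFlow wt σ M p
  · obtain ⟨p, hp⟩ := hflow
    refine le_csInf ⟨flowEnergy wt p, p, hp, rfl⟩ ?_
    rintro _ ⟨p, hp, rfl⟩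
    obtain ⟨q, hq, hle⟩ := hlift p hp
    exact (effRes_le_flowEnergy hq).trans hle
  · rw [effRes_eq_zero_of_not_exists_isFlow hflow,
      effRes_eq_zero_of_not_exists_isFlow fun ⟨q, hq⟩ => hflow (hproj q hq)]

def doubleCover (wt : V → V → ℝ) : V × Bool → V × Bool → ℝ :=
  fun a b => if a.2 ≠ b.2 then wt a.1 b.1 else 0

def liftToDoubleCover (p t : V → V → ℝ) : V × Bool → V × Bool → ℝ :=
  fun a b => if a.2 = b.2 then 0 else if a.2 then (p a.1 b.1 - t a.1 b.1) / 2
    else (p a.1 b.1 + t a.1 b.1) / 2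

def projectDoubleCover (q : V × Bool → V × Bool → ℝ) : V → V → ℝ :=
  fun u v => q (u, false) (v, true) + q (u, true) (v, false)

theorem sum_doubleCover (wt : V → V → ℝ) :
    ∑ a, ∑ b, doubleCover wt a b = 2 * ∑ u, ∑ v, wt u v := by
  simp [doubleCover, Fintype.sum_prod_type, sum_add_distrib, mul_sum, two_mul]

theorem isFlow_liftToDoubleCover {p t : V → V → ℝ} (hp : IsFlow wt σ M p)
    (ht_symm : ∀ u v, t v u = t u v) (ht_abs : ∀ u v, |t u v| ≤ |p u v|)
    (ht_row : ∀ u ∉ M, ∑ v, t u v = σ u) :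
    IsFlow (doubleCover wt) (fun a => if a.2 = false then σ a.1 else 0) {a | a.1 ∈ M}
      (liftToDoubleCover p t) := by
  obtain ⟨hp_anti, hp_supp, hp_row⟩ := hp
  refine ⟨?_, ?_, ?_⟩
  · rintro ⟨u, i⟩ ⟨v, j⟩
    cases i <;> cases j <;>
      simp only [liftToDoubleCover, Bool.true_eq_false, Bool.false_eq_true, ↓reduceIte,
        hp_anti u v, ht_symm u v, neg_zero] <;> ring
  · rintro ⟨u, i⟩ ⟨v, j⟩ hq
    have hpuv : p u v ≠ 0 := fun h0 => by
      have ht0 : t u v = 0 := abs_nonpos_iff.mp ((ht_abs u v).trans (by simp [h0]))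
      cases i <;> cases j <;> simp [liftToDoubleCover, h0, ht0] at hq
    cases i <;> cases j <;> simp [liftToDoubleCover, doubleCover, hp_supp u v hpuv] at hq ⊢
  · rintro ⟨u, i⟩ hu
    have hu : u ∉ M := hu
    cases i <;> simp [liftToDoubleCover, Fintype.sum_prod_type, ← sum_div, sum_add_distrib,
      sum_sub_distrib, hp_row u hu, ht_row u hu]

theorem flowEnergy_liftToDoubleCover_le {p t : V → V → ℝ}
    (hp_supp : ∀ u v, p u v ≠ 0 → 0 < wt u v) (ht_abs : ∀ u v, |t u v| ≤ |p u v|) :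
    flowEnergy (doubleCover wt) (liftToDoubleCover p t) ≤ flowEnergy wt p := by
  have hterm : ∀ u v, ((p u v - t u v) / 2) ^ 2 / wt u v + ((p u v + t u v) / 2) ^ 2 / wt u v ≤
      p u v ^ 2 / wt u v := fun u v => by
    by_cases h0 : p u v = 0
    · have ht0 : t u v = 0 := abs_nonpos_iff.mp ((ht_abs u v).trans (by simp [h0]))
      simp [h0, ht0]
    · rw [← add_div]
      refine div_le_div_of_nonneg_right ?_ (hp_supp u v h0).le
      nlinarith [sq_le_sq.mpr (ht_abs u v)]
  unfold flowEnergy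
  gcongr
  simp only [Fintype.sum_prod_type, Fintype.sum_bool, liftToDoubleCover, doubleCover,
    ↓reduceIte, ne_eq, OfNat.ofNat_ne_zero, not_false_eq_true, zero_pow, not_true_eq_false,
    div_zero, Bool.true_eq_false, zero_add, Bool.false_eq_true, add_zero]
  exact sum_le_sum fun u _ => sum_add_distrib.symm.trans_le (sum_le_sum fun v _ => hterm u v)

theorem exists_isFlow_doubleCover_flowEnergy_le (hσ : ∀ u, 0 ≤ σ u) {p : V → V → ℝ}
    (hp : IsFlow wt σ M p) :
    ∃ q, IsFlow (doubleCover wt) (fun a => if a.2 = false then σ a.1 else 0) {a | a.1 ∈ M} q ∧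
      flowEnergy (doubleCover wt) q ≤ flowEnergy wt p := by
  obtain ⟨t, ht_symm, ht_abs, ht_row⟩ := exists_symm_abs_le_rowSum_eq p hp.1 M
    fun u hu => (hp.2.2 u hu).symm ▸ hσ u
  exact ⟨_, isFlow_liftToDoubleCover hp ht_symm ht_abs fun u hu => (ht_row u hu).trans
    (hp.2.2 u hu), flowEnergy_liftToDoubleCover_le hp.2.1 ht_abs⟩

theorem isFlow_projectDoubleCover {q : V × Bool → V × Bool → ℝ}
    (hq : IsFlow (doubleCover wt) (fun a => if a.2 = false then σ a.1 else 0) {a | a.1 ∈ M} q) :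
    IsFlow wt σ M (projectDoubleCover q) := by
  obtain ⟨hq_anti, hq_supp, hq_row⟩ := hq
  have hq_level : ∀ u v i, q (u, i) (v, i) = 0 := fun u v i => by
    by_contra h
    simpa [doubleCover] using hq_supp _ _ h
  refine ⟨fun u v => ?_, fun u v h => ?_, fun u hu => ?_⟩
  · simp only [projectDoubleCover, hq_anti (u, _) (v, _)]; ring
  · by_cases h' : q (u, false) (v, true) = 0
    · simpa [doubleCover] using
        hq_supp (u, true) (v, false) (by simpa [projectDoubleCover, h'] using h)
    · simpa [doubleCover] using hq_supp (u, false) (v, true) h'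
  · have h0 := hq_row (u, false) hu
    have h1 := hq_row (u, true) hu
    simp only [Fintype.sum_prod_type, Fintype.sum_bool, hq_level, zero_add, add_zero] at h0 h1
    simp [projectDoubleCover, sum_add_distrib, h0, h1]

end Flows

theorem bipartite_double_cover_weight_and_resistance_general
    (wt : V → V → ℝ)
    (σ : V → ℝ) (hσnonneg : ∀ u, 0 ≤ σ u)
    (M : Set V)
    (wt' : V × Bool → V × Bool → ℝ)
    (hwt' : ∀ a b, wt' a b = if a.2 ≠ b.2 then wt a.1 b.1 else 0)
    (σ' : V × Bool → ℝ)
    (hσ' : ∀ a, σ' a = if a.2 = false then σ a.1 else 0)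
    (M' : Set (V × Bool)) (hM' : M' = {a | a.1 ∈ M}) :
    ((1 / 2) * ∑ a : V × Bool, ∑ b : V × Bool, wt' a b
        = 2 * ((1 / 2) * ∑ u, ∑ v, wt u v))
    ∧ effRes wt' σ' M' ≤ effRes wt σ M := by
  obtain rfl : wt' = doubleCover wt := funext₂ hwt'
  obtain rfl : σ' = fun a => if a.2 = false then σ a.1 else 0 := funext hσ'
  subst hM'
  refine ⟨by rw [sum_doubleCover]; ring, effRes_le_effRes
    (fun p hp => exists_isFlow_doubleCover_flowEnergy_le hσnonneg hp)
    fun q hq => ⟨_, isFlow_projectDoubleCover hq⟩⟩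

/-- Bipartite double cover: for a finite weighted graph `G` on `V`, the graph
`G'` on `V × {0,1}` with `w'_{(u,0)(v,1)} = w'_{(u,1)(v,0)} = w_{uv}` has total
weight `W' = 2W`, and its effective resistance from `σ'` (`σ` placed on level
`0`) to `M' = M × {0,1}` is at most `R_{σ,M}(G)`. -/
theorem bipartite_double_cover_weight_and_resistance
    (wt : V → V → ℝ) (hsymm : ∀ u v, wt u v = wt v u) (hnonneg : ∀ u v, 0 ≤ wt u v)
    (σ : V → ℝ) (hσnonneg : ∀ u, 0 ≤ σ u) (hσsum : ∑ u, σ u = 1)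
    (M : Set V) (hM : M.Nonempty)
    (wt' : V × Bool → V × Bool → ℝ)
    (hwt' : ∀ a b, wt' a b = if a.2 ≠ b.2 then wt a.1 b.1 else 0)
    (σ' : V × Bool → ℝ)
    (hσ' : ∀ a, σ' a = if a.2 = false then σ a.1 else 0)
    (M' : Set (V × Bool)) (hM' : M' = {a | a.1 ∈ M}) :
    ((1 / 2) * ∑ a : V × Bool, ∑ b : V × Bool, wt' a b
        = 2 * ((1 / 2) * ∑ u, ∑ v, wt u v))
    ∧ effRes wt' σ' M' ≤ effRes wt σ M :=
  bipartite_double_cover_weight_and_resistance_general wt σ hσnonneg M wt' hwt' σ' hσ' M' hM'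

end
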